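/- arXiv:1907.07848 — 2 statements merged into one kernel-verified Lean document; each statement's English description precedes it below -/
import Mathlib

section
/- Let d, n be positive integers with n > d, and let Φ = (φ_1, …, φ_n) be a family of unit vectors in 𝔽^d (𝔽 = ℝ or ℂ) that minimizes coherence among all families of n unit vectors in 𝔽^d. Then there exists an index j ∈ {1, …, n} such that the vectors φ_k with |⟨φ_j, φ_k⟩| = μ(Φ) (k ≠ j) span 𝔽^d. -/
/-!
Suppose that for every `j` the vectors `φ_k` attaining `μ = μ(Φ)` against `φ_j` span a proper
subspace, and pick `ψ_j ≠ 0` orthogonal to it, with `Re ⟪φ_j, ψ_j⟫ ≥ 0` after a change of sign.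
For small `t > 0` the unit vector in the direction of `φ_j + t ψ_j` has, with those neighbours,
the old products divided by a norm `> 1`, while its other products stay below `μ` by continuity.
Replacing the vectors one at a time — a replaced vector no longer attains `μ` with anything, so
the critical neighbours of the next one are still original vectors — gives a family of unit
vectors with coherence below `μ`, against minimality. And `μ > 0`, since more than `d` unit
vectors in `𝔽^d` cannot be orthonormal.
-/

/-- The coherence of a family of vectors `Φ` in `𝕜^d`:
`μ(Φ) = max_{j ≠ k} |⟨φ_j, φ_k⟩|` (equal to the max over `j < k` by symmetry),
with the convention that the coherence of a single vector is `0`. -/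
noncomputable def coherence {𝕜 : Type*} [RCLike 𝕜] {d n : ℕ}
    (Φ : Fin n → EuclideanSpace 𝕜 (Fin d)) : ℝ :=
  ((Finset.univ.filter fun p : Fin n × Fin n => p.1 ≠ p.2).sup
    fun p => ‖(inner 𝕜 (Φ p.1) (Φ p.2) : 𝕜)‖₊ : NNReal)

open scoped InnerProductSpace Topology
open Filter RCLike

section Perturbation

variable {𝕜 E ι : Type*} [RCLike 𝕜] [NormedAddCommGroup E] [InnerProductSpace 𝕜 E] {μ : ℝ}

theorem one_lt_norm_add_smul {v ψ : E} (hv : ‖v‖ = 1) (hψ : ψ ≠ 0) (hre : 0 ≤ re ⟪v, ψ⟫_𝕜)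
    {t : ℝ} (ht : 0 < t) : 1 < ‖v + (t : 𝕜) • ψ‖ := by
  have hsq : ‖v + (t : 𝕜) • ψ‖ ^ 2 = 1 + 2 * t * re ⟪v, ψ⟫_𝕜 + t ^ 2 * ‖ψ‖ ^ 2 := by
    rw [@norm_add_sq 𝕜, hv, inner_smul_right, re_ofReal_mul, norm_smul, norm_ofReal,
      abs_of_pos ht]
    ring
  have : 0 < t ^ 2 * ‖ψ‖ ^ 2 := by positivity
  nlinarith [norm_nonneg (v + (t : 𝕜) • ψ), mul_nonneg ht.le hre]

theorem norm_inner_inv_norm_smul_left (w y : E) :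
    ‖⟪(‖w‖ : 𝕜)⁻¹ • w, y⟫_𝕜‖ = ‖⟪w, y⟫_𝕜‖ / ‖w‖ := by
  rw [inner_smul_left, norm_mul, RCLike.norm_conj, norm_inv, norm_ofReal, abs_norm,
    inv_mul_eq_div]

theorem exists_norm_eq_one_forall_norm_inner_lt [Finite ι] (hμ : 0 < μ) {v ψ : E}
    (hv : ‖v‖ = 1) (hψ : ψ ≠ 0) (x : ι → E) (hle : ∀ k, ‖⟪v, x k⟫_𝕜‖ ≤ μ)
    (horth : ∀ k, ‖⟪v, x k⟫_𝕜‖ = μ → ⟪ψ, x k⟫_𝕜 = 0) :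
    ∃ u : E, ‖u‖ = 1 ∧ ∀ k, ‖⟪u, x k⟫_𝕜‖ < μ := by
  wlog hre : 0 ≤ re ⟪v, ψ⟫_𝕜 generalizing ψ
  · refine this (neg_ne_zero.2 hψ) (fun k hk => by rw [inner_neg_left, horth k hk, neg_zero]) ?_
    rw [inner_neg_right, map_neg]
    linarith
  set w : ℝ → E := fun t => v + (t : 𝕜) • ψ
  have hw : ∀ t > 0, 1 < ‖w t‖ := fun t ht => one_lt_norm_add_smul hv hψ hre ht
  have heventually : ∀ k, ∀ᶠ t in 𝓝[>] 0, ‖⟪w t, x k⟫_𝕜‖ / ‖w t‖ < μ := by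
    intro k
    rcases (hle k).eq_or_lt with hmax | hlt
    · filter_upwards [self_mem_nhdsWithin] with t ht
      rw [inner_add_left, inner_smul_left, horth k hmax, mul_zero, add_zero, hmax]
      exact div_lt_self hμ (hw t ht)
    · have hcont : Continuous fun t : ℝ => ‖⟪w t, x k⟫_𝕜‖ := by fun_prop
      have hnear : ∀ᶠ t in 𝓝 0, ‖⟪w t, x k⟫_𝕜‖ < μ :=
        hcont.continuousAt.eventually_lt continuousAt_const (by simpa [w] using hlt)
      filter_upwards [self_mem_nhdsWithin, nhdsWithin_le_nhds hnear] with t ht hnear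
      exact (div_le_self (norm_nonneg _) (hw t ht).le).trans_lt hnear
  obtain ⟨t, hsmall, ht⟩ := ((eventually_all.2 heventually).and self_mem_nhdsWithin).exists
  refine ⟨(‖w t‖ : 𝕜)⁻¹ • w t, norm_smul_inv_norm (norm_pos_iff.1 (one_pos.trans (hw t ht))),
    fun k => ?_⟩
  rw [norm_inner_inv_norm_smul_left]
  exact hsmall k

theorem forall_mem_insert_norm_inner_update_lt [DecidableEq ι] {Ψ : ι → E} {S : Finset ι}
    {i : ι} {u : E} (hlt : ∀ j ∈ S, ∀ k ≠ j, ‖⟪Ψ j, Ψ k⟫_𝕜‖ < μ)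
    (hu : ∀ k : {k // k ≠ i}, ‖⟪u, Ψ k⟫_𝕜‖ < μ) :
    ∀ j ∈ insert i S, ∀ k ≠ j,
      ‖⟪Function.update Ψ i u j, Function.update Ψ i u k⟫_𝕜‖ < μ := by
  intro j hj k hkj
  rcases eq_or_ne j i with rfl | hji
  · rw [Function.update_self, Function.update_of_ne hkj]
    exact hu ⟨k, hkj⟩
  have hjS : j ∈ S := (Finset.mem_insert.1 hj).resolve_left hji
  rcases eq_or_ne k i with rfl | hki
  · rw [Function.update_self, Function.update_of_ne hji, norm_inner_symm]
    exact hu ⟨j, hji⟩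
  · rw [Function.update_of_ne hji, Function.update_of_ne hki]
    exact hlt j hjS k hkj

variable [FiniteDimensional 𝕜 E] {Φ : ι → E}

theorem exists_forall_mem_norm_inner_lt [Finite ι] (hμ : 0 < μ) (hΦ : ∀ j, ‖Φ j‖ = 1)
    (hle : Pairwise fun j k => ‖⟪Φ j, Φ k⟫_𝕜‖ ≤ μ)
    (hspan : ∀ j, Submodule.span 𝕜 (Φ '' {k | k ≠ j ∧ ‖⟪Φ j, Φ k⟫_𝕜‖ = μ}) ≠ ⊤)
    (S : Finset ι) :
    ∃ Ψ : ι → E, (∀ j, ‖Ψ j‖ = 1) ∧ (∀ k ∉ S, Ψ k = Φ k) ∧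
      ∀ j ∈ S, ∀ k ≠ j, ‖⟪Ψ j, Ψ k⟫_𝕜‖ < μ := by
  classical
  induction S using Finset.induction_on with
  | empty => exact ⟨Φ, hΦ, fun _ _ => rfl, by simp⟩
  | insert i S hi ih =>
    obtain ⟨Ψ, hΨ, hΨΦ, hlt⟩ := ih
    obtain ⟨ψ, hψK, hψ⟩ := (Submodule.ne_bot_iff _).1
      (mt Submodule.orthogonal_eq_bot_iff.1 (hspan i))
    have hΨi : Ψ i = Φ i := hΨΦ i hi
    have hle' : ∀ k : {k // k ≠ i}, ‖⟪Ψ i, Ψ k⟫_𝕜‖ ≤ μ := by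
      intro k
      by_cases hkS : (k : ι) ∈ S
      · rw [norm_inner_symm]
        exact (hlt k hkS i k.2.symm).le
      · rw [hΨi, hΨΦ k hkS]
        exact hle k.2.symm
    have horth : ∀ k : {k // k ≠ i}, ‖⟪Ψ i, Ψ k⟫_𝕜‖ = μ → ⟪ψ, Ψ k⟫_𝕜 = 0 := by
      intro k hk
      have hkS : (k : ι) ∉ S := fun hkS =>
        (hlt k hkS i k.2.symm).ne (by rwa [norm_inner_symm])
      rw [hΨi, hΨΦ k hkS] at hk
      rw [hΨΦ k hkS]
      exact (Submodule.mem_orthogonal' _ _).1 hψK _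
        (Submodule.subset_span ⟨k, ⟨k.2, hk⟩, rfl⟩)
    obtain ⟨u, hu, hult⟩ := exists_norm_eq_one_forall_norm_inner_lt hμ (hΨ i) hψ
      (fun k : {k // k ≠ i} => Ψ k) hle' horth
    refine ⟨Function.update Ψ i u, ?_, ?_, forall_mem_insert_norm_inner_update_lt hlt hult⟩
    · intro j
      rcases eq_or_ne j i with rfl | hj <;> simp [*]
    · intro k hk
      rw [Finset.mem_insert, not_or] at hk
      rw [Function.update_of_ne hk.1]
      exact hΨΦ k hk.2

theorem exists_pairwise_norm_inner_lt [Fintype ι] (hμ : 0 < μ) (hΦ : ∀ j, ‖Φ j‖ = 1)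
    (hle : Pairwise fun j k => ‖⟪Φ j, Φ k⟫_𝕜‖ ≤ μ)
    (hspan : ∀ j, Submodule.span 𝕜 (Φ '' {k | k ≠ j ∧ ‖⟪Φ j, Φ k⟫_𝕜‖ = μ}) ≠ ⊤) :
    ∃ Ψ : ι → E, (∀ j, ‖Ψ j‖ = 1) ∧ Pairwise fun j k => ‖⟪Ψ j, Ψ k⟫_𝕜‖ < μ := by
  obtain ⟨Ψ, hΨ, -, hlt⟩ := exists_forall_mem_norm_inner_lt hμ hΦ hle hspan Finset.univ
  exact ⟨Ψ, hΨ, fun j k hjk => hlt j (Finset.mem_univ j) k hjk.symm⟩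

end Perturbation

section Coherence

variable {𝕜 : Type*} [RCLike 𝕜] {d n : ℕ} (Φ : Fin n → EuclideanSpace 𝕜 (Fin d))

theorem norm_inner_le_coherence {j k : Fin n} (h : j ≠ k) : ‖⟪Φ j, Φ k⟫_𝕜‖ ≤ coherence Φ := by
  have hmem : (j, k) ∈ Finset.univ.filter fun p : Fin n × Fin n => p.1 ≠ p.2 := by simp [h]
  exact_mod_cast Finset.le_sup (f := fun p : Fin n × Fin n => ‖⟪Φ p.1, Φ p.2⟫_𝕜‖₊) hmem

theorem coherence_lt_of_pairwise {c : ℝ} (hc : 0 < c)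
    (h : Pairwise fun j k => ‖⟪Φ j, Φ k⟫_𝕜‖ < c) : coherence Φ < c := by
  lift c to NNReal using hc.le
  rw [coherence, NNReal.coe_lt_coe, Finset.sup_lt_iff (by exact_mod_cast hc)]
  rintro ⟨j, k⟩ hjk
  exact_mod_cast h (by simpa using hjk)

theorem coherence_pos (hn : d < n) (hΦ : ∀ j, ‖Φ j‖ = 1) : 0 < coherence Φ := by
  refine (NNReal.coe_nonneg _ : 0 ≤ coherence Φ).lt_of_ne' fun h0 => ?_
  have hon : Orthonormal 𝕜 Φ :=
    ⟨hΦ, fun j k hjk => norm_le_zero_iff.1 (h0 ▸ norm_inner_le_coherence Φ hjk)⟩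
  have := hon.linearIndependent.fintype_card_le_finrank
  rw [finrank_euclideanSpace_fin, Fintype.card_fin] at this
  omega

end Coherence

theorem grassmannian_frame_exists_spanning_neighbors_general {𝕜 : Type*} [RCLike 𝕜] {d n : ℕ}
    (hn : d < n)
    (Φ : Fin n → EuclideanSpace 𝕜 (Fin d))
    (hunit : ∀ j, ‖Φ j‖ = 1)
    (hmin : ∀ Ψ : Fin n → EuclideanSpace 𝕜 (Fin d),
      (∀ j, ‖Ψ j‖ = 1) → coherence Φ ≤ coherence Ψ) :
    ∃ j : Fin n, Submodule.span 𝕜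
      (Φ '' {k | k ≠ j ∧ ‖(inner 𝕜 (Φ j) (Φ k) : 𝕜)‖ = coherence Φ}) = ⊤ := by
  by_contra! hspan
  have hμ := coherence_pos Φ hn hunit
  obtain ⟨Ψ, hΨ, hlt⟩ := exists_pairwise_norm_inner_lt hμ hunit
    (fun _ _ => norm_inner_le_coherence Φ) hspan
  exact (hmin Ψ hΨ).not_gt (coherence_lt_of_pairwise Ψ hμ hlt)

/-- If `Φ` is a Grassmannian frame of `n > d` unit vectors in `𝔽^d`, then there
is an index `j` such that the vectors `φ_k` (`k ≠ j`) making maximal angle with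
`φ_j`, i.e. with `|⟨φ_j, φ_k⟩| = μ(Φ)`, span `𝔽^d`. -/
theorem grassmannian_frame_exists_spanning_neighbors {𝕜 : Type*} [RCLike 𝕜] {d n : ℕ}
    (hd : 0 < d) (hn : d < n)
    (Φ : Fin n → EuclideanSpace 𝕜 (Fin d))
    (hunit : ∀ j, ‖Φ j‖ = 1)
    (hmin : ∀ Ψ : Fin n → EuclideanSpace 𝕜 (Fin d),
      (∀ j, ‖Ψ j‖ = 1) → coherence Φ ≤ coherence Ψ) :
    ∃ j : Fin n, Submodule.span 𝕜
      (Φ '' {k | k ≠ j ∧ ‖(inner 𝕜 (Φ j) (Φ k) : 𝕜)‖ = coherence Φ}) = ⊤ :=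
  grassmannian_frame_exists_spanning_neighbors_general hn Φ hunit hmin
end

section
/- (Orthoplex bound, real case) Let d, n be positive integers with d ≥ 2 and n > d(d+1)/2, and let Φ = (φ_1, …, φ_n) be any family of unit vectors in ℝ^d. Then μ(Φ) ≥ 1/√d. -/
open Finset Matrix

section
variable {ι κ : Type*} [Fintype ι] [Fintype κ]

theorem trace_vecMulVec_self_mul_vecMulVec_self {R : Type*} [CommRing R] (u v : ι → R) :
    (vecMulVec u u * vecMulVec v v).trace = (u ⬝ᵥ v) ^ 2 := by
  rw [vecMulVec_mul_vecMulVec, trace_vecMulVec, dotProduct_smul, smul_eq_mul, dotProduct_comm, sq]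

theorem trace_sum_smul_vecMulVec_self_mul_sum {R : Type*} [CommRing R] (u : κ → ι → R)
    (a b : κ → R) :
    ((∑ j, a j • vecMulVec (u j) (u j)) * ∑ k, b k • vecMulVec (u k) (u k)).trace =
      ∑ j, ∑ k, a j * b k * (u j ⬝ᵥ u k) ^ 2 := by
  simp only [sum_mul, mul_sum, trace_sum, smul_mul_smul_comm, trace_smul,
    trace_vecMulVec_self_mul_vecMulVec_self, smul_eq_mul]
  exact sum_comm

theorem sq_trace_le_card_mul_trace_mul_transpose (A : Matrix ι ι ℝ) :
    A.trace ^ 2 ≤ Fintype.card ι * (A * Aᵀ).trace := by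
  simp only [trace, Matrix.diag, mul_apply, transpose_apply]
  calc (∑ i, A i i) ^ 2 ≤ Fintype.card ι * ∑ i, A i i ^ 2 := by
        simpa using sq_sum_le_card_mul_sum_sq (s := univ) (f := fun i => A i i)
    _ ≤ Fintype.card ι * ∑ i, ∑ j, A i j * A i j := by
        gcongr with i
        simpa [sq] using single_le_sum (f := fun j => A i j * A i j)
          (fun j _ => mul_self_nonneg _) (mem_univ i)

theorem exists_ne_zero_sum_smul_vecMulVec_self_eq_zero {K : Type*} [Field K] (u : κ → ι → K)
    (hcard : Fintype.card (Sym2 ι) < Fintype.card κ) :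
    ∃ c : κ → K, c ≠ 0 ∧ ∑ j, c j • vecMulVec (u j) (u j) = 0 := by
  classical
  let symSq : (ι → K) → Sym2 ι → K := fun v =>
    Sym2.lift ⟨fun a b => v a * v b, fun a b => mul_comm _ _⟩
  have hdep : ¬ LinearIndependent K (fun j => symSq (u j)) := fun h => by
    have := h.fintype_card_le_finrank
    rw [Module.finrank_fintype_fun_eq_card] at this
    omega
  obtain ⟨c, hsum, j, hj⟩ := Fintype.not_linearIndependent_iff.mp hdep
  refine ⟨c, fun h => hj (congrFun h j), ?_⟩
  ext a b
  simpa [symSq, Matrix.sum_apply, vecMulVec_apply] using congrFun hsum s(a, b)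

theorem sum_sum_mul_mul_le_of_le_of_ne {G : κ → κ → ℝ} {M : ℝ} (hG : ∀ j k, j ≠ k → G j k ≤ M)
    {a b : κ → ℝ} (ha : 0 ≤ a) (hb : 0 ≤ b) (hab : ∀ j, a j * b j = 0) :
    ∑ j, ∑ k, a j * b k * G j k ≤ M * ((∑ j, a j) * ∑ k, b k) := by
  rw [sum_mul_sum, mul_sum]
  refine sum_le_sum fun j _ => ?_
  rw [mul_sum]
  refine sum_le_sum fun k _ => ?_
  obtain rfl | hjk := eq_or_ne j k
  · simp [hab]
  · rw [mul_comm M]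
    exact mul_le_mul_of_nonneg_left (hG j k hjk) (mul_nonneg (ha j) (hb k))

theorem one_le_card_mul_sq_of_sum_smul_vecMulVec_self_eq_zero {u : κ → ι → ℝ}
    (hu : ∀ j, u j ⬝ᵥ u j = 1) {μ : ℝ} (hμ : ∀ j k, j ≠ k → |u j ⬝ᵥ u k| ≤ μ)
    {c : κ → ℝ} (hc : c ≠ 0) (hdep : ∑ j, c j • vecMulVec (u j) (u j) = 0) :
    1 ≤ Fintype.card ι * μ ^ 2 := by
  set S := ∑ j, (c j)⁺ • vecMulVec (u j) (u j)
  have hS : S = ∑ j, (c j)⁻ • vecMulVec (u j) (u j) := by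
    rw [← sub_eq_zero, ← sum_sub_distrib, ← hdep]
    simp only [← sub_smul, posPart_sub_negPart]
  have hSt : Sᵀ = S := by
    simp only [S, transpose_sum, transpose_smul, transpose_vecMulVec]
  have htrace (a : κ → ℝ) : (∑ j, a j • vecMulVec (u j) (u j)).trace = ∑ j, a j := by
    simp [hu]
  set s := ∑ j, (c j)⁺
  have hs_neg : ∑ j, (c j)⁻ = s := by rw [← htrace, ← hS, htrace]
  have hs : 0 < s := by
    refine (sum_nonneg fun j _ => posPart_nonneg (c j)).lt_of_ne fun h0 => hc ?_
    have hpos := (sum_eq_zero_iff_of_nonneg fun j _ => posPart_nonneg (c j)).1 h0.symm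
    have hneg :=
      (sum_eq_zero_iff_of_nonneg fun j _ => negPart_nonneg (c j)).1 (hs_neg.trans h0.symm)
    funext j
    rw [← posPart_sub_negPart (c j), hpos j (mem_univ j), hneg j (mem_univ j), sub_zero,
      Pi.zero_apply]
  have hfrob : (S * Sᵀ).trace ≤ μ ^ 2 * (s * s) := by
    rw [hSt]
    nth_rw 2 [hS]
    rw [trace_sum_smul_vecMulVec_self_mul_sum]
    calc _ ≤ μ ^ 2 * ((∑ j, (c j)⁺) * ∑ k, (c k)⁻) :=
          sum_sum_mul_mul_le_of_le_of_ne
            (fun j k hjk => sq_le_sq' (abs_le.1 (hμ j k hjk)).1 (abs_le.1 (hμ j k hjk)).2)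
            (fun j => posPart_nonneg (c j)) (fun j => negPart_nonneg (c j))
            (fun j => (le_total (c j) 0).elim (fun h => by simp [posPart_eq_zero.2 h])
              fun h => by simp [negPart_eq_zero.2 h])
      _ = μ ^ 2 * (s * s) := by rw [hs_neg]
  have : 1 * s ^ 2 ≤ Fintype.card ι * μ ^ 2 * s ^ 2 := calc
    1 * s ^ 2 = S.trace ^ 2 := by rw [htrace, one_mul]
    _ ≤ Fintype.card ι * (S * Sᵀ).trace := sq_trace_le_card_mul_trace_mul_transpose S
    _ ≤ Fintype.card ι * (μ ^ 2 * (s * s)) := by gcongr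
    _ = Fintype.card ι * μ ^ 2 * s ^ 2 := by ring
  exact le_of_mul_le_mul_right this (by positivity)

end

theorem norm_inner_le_coherence_s7 {𝕜 : Type*} [RCLike 𝕜] {d n : ℕ}
    (Φ : Fin n → EuclideanSpace 𝕜 (Fin d)) {j k : Fin n} (hjk : j ≠ k) :
    ‖(inner 𝕜 (Φ j) (Φ k) : 𝕜)‖ ≤ coherence Φ := by
  have hmem : (j, k) ∈ univ.filter fun p : Fin n × Fin n => p.1 ≠ p.2 := by simp [hjk]
  exact NNReal.coe_le_coe.2 (le_sup (f := fun p : Fin n × Fin n =>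
    ‖(inner 𝕜 (Φ p.1) (Φ p.2) : 𝕜)‖₊) hmem)

theorem orthoplex_bound_real_general {d n : ℕ} (hn : d * (d + 1) / 2 < n)
    (Φ : Fin n → EuclideanSpace ℝ (Fin d))
    (hunit : ∀ j, ‖Φ j‖ = 1) :
    1 / Real.sqrt d ≤ coherence Φ := by
  have hinner (j k : Fin n) : inner ℝ (Φ j) (Φ k) = (Φ j).ofLp ⬝ᵥ (Φ k).ofLp := by
    rw [EuclideanSpace.inner_eq_star_dotProduct, star_trivial, dotProduct_comm]
  have hcard : Fintype.card (Sym2 (Fin d)) < Fintype.card (Fin n) := by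
    rwa [Sym2.card, Fintype.card_fin, Fintype.card_fin, Nat.choose_two_right, mul_comm]
  obtain ⟨c, hc, hdep⟩ :=
    exists_ne_zero_sum_smul_vecMulVec_self_eq_zero (fun j => (Φ j).ofLp) hcard
  have hμ : 1 ≤ d * coherence Φ ^ 2 := by
    simpa using one_le_card_mul_sq_of_sum_smul_vecMulVec_self_eq_zero
      (fun j => by rw [← hinner, real_inner_self_eq_norm_sq, hunit, one_pow])
      (fun j k hjk => by simpa [hinner] using norm_inner_le_coherence_s7 Φ hjk) hc hdep
  calc 1 / Real.sqrt d = Real.sqrt (1 / d) := by rw [one_div, one_div, Real.sqrt_inv]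
    _ ≤ Real.sqrt (coherence Φ ^ 2) :=
        Real.sqrt_le_sqrt (div_le_of_le_mul₀ (by positivity) (by positivity) (by linarith))
    _ = coherence Φ := Real.sqrt_sq (NNReal.coe_nonneg _)

/-- Orthoplex bound, real case: any `n > d(d+1)/2` unit vectors in `ℝ^d`
(`d ≥ 2`) satisfy `μ(Φ) ≥ 1/√d`. -/
theorem orthoplex_bound_real {d n : ℕ} (hd : 2 ≤ d) (hn : d * (d + 1) / 2 < n)
    (Φ : Fin n → EuclideanSpace ℝ (Fin d))
    (hunit : ∀ j, ‖Φ j‖ = 1) :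
    1 / Real.sqrt d ≤ coherence Φ :=
  orthoplex_bound_real_general hn Φ hunit
end
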